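/- Let G be a finite group, N ⊴ G with G/N abelian, and σ an irreducible complex representation of G. Define X(σ) = {η ∈ Hom(G/N, ℂ^×) : σ ⊗ η ≅ σ}. Then |X(σ)| = dim_ℂ End_N(Res^G_N σ). -/

import Mathlib

open CategoryTheory

/-- The restriction of a representation of `G` to a subgroup `N`. -/
noncomputable def FDRep.resSubgroup {G : Type} [Group G] (N : Subgroup G)
    (σ : FDRep ℂ G) : FDRep ℂ N :=
  (Action.res (FGModuleCat ℂ) N.subtype).obj σ

/-- The twist `σ ⊗ η` of a representation `σ` by a one-dimensional character `η : G → ℂˣ`. -/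
noncomputable def FDRep.twist {G : Type} [Group G] (σ : FDRep ℂ G) (η : G →* ℂˣ) :
    FDRep ℂ G :=
  FDRep.of
  { toFun := fun g => (η g : ℂ) • σ.ρ g
    map_one' := by simp
    map_mul' := fun g h => by
      show ((η (g * h) : ℂ) • σ.ρ (g * h)) = ((η g : ℂ) • σ.ρ g) * ((η h : ℂ) • σ.ρ h)
      rw [map_mul, map_mul, Units.val_mul, smul_mul_assoc, mul_smul_comm, smul_smul] }

namespace FDRep

variable {G : Type} [Group G]

lemma twist_character (σ : FDRep ℂ G) (η : G →* ℂˣ) (g : G) :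
    (σ.twist η).character g = (η g : ℂ) * σ.character g := by
  show LinearMap.trace ℂ _ ((η g : ℂ) • σ.ρ g) = (η g : ℂ) * LinearMap.trace ℂ _ (σ.ρ g)
  rw [map_smul]; rfl

/-- Twisting as a functor. -/
noncomputable def twistFunctor (η : G →* ℂˣ) : FDRep ℂ G ⥤ FDRep ℂ G where
  obj σ := σ.twist η
  map {σ τ} f :=
    { hom := f.hom
      comm := fun g => by
        apply FGModuleCat.hom_ext
        show f.hom.hom.hom.comp ((η g : ℂ) • σ.ρ g) = ((η g : ℂ) • τ.ρ g).comp f.hom.hom.hom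
        rw [LinearMap.comp_smul, LinearMap.smul_comp]
        rw [show f.hom.hom.hom ∘ₗ σ.ρ g = (τ.ρ g) ∘ₗ f.hom.hom.hom from
          congrArg (fun x => x.hom.hom) (f.comm g)] }
  map_id _ := rfl
  map_comp _ _ := rfl

noncomputable def twistTwistIso (σ : FDRep ℂ G) (η ν : G →* ℂˣ)
    (h : ∀ g : G, (ν g : ℂ) * (η g : ℂ) = 1) : (σ.twist η).twist ν ≅ σ :=
  Action.mkIso (Iso.mk (FGModuleCat.ofHom LinearMap.id : ((σ.twist η).twist ν).V ⟶ σ.V)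
      (FGModuleCat.ofHom LinearMap.id : σ.V ⟶ ((σ.twist η).twist ν).V) (by ext; rfl) (by ext; rfl))
    (fun g => by
      apply FGModuleCat.hom_ext
      show LinearMap.id.comp ((ν g : ℂ) • (η g : ℂ) • σ.ρ g) = (σ.ρ g).comp LinearMap.id
      rw [LinearMap.id_comp, LinearMap.comp_id, smul_smul, h, one_smul])

lemma inv_mul_char (η : G →* ℂˣ) (g : G) : ((η⁻¹ g : ℂˣ) : ℂ) * (η g : ℂ) = 1 := by
  simp [MonoidHom.inv_apply]

lemma mul_inv_char (η : G →* ℂˣ) (g : G) : ((η g : ℂˣ) : ℂ) * (η⁻¹ g : ℂ) = 1 := by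
  simp [MonoidHom.inv_apply]

/-- Twisting is an equivalence of categories. -/
noncomputable def twistEquiv (η : G →* ℂˣ) : FDRep ℂ G ≌ FDRep ℂ G where
  functor := twistFunctor η
  inverse := twistFunctor η⁻¹
  unitIso := NatIso.ofComponents
    (fun σ => (twistTwistIso σ η η⁻¹ (inv_mul_char η)).symm)
    (fun f => by apply Action.hom_ext; ext; rfl)
  counitIso := NatIso.ofComponents
    (fun σ => twistTwistIso σ η⁻¹ η (mul_inv_char η))
    (fun f => by apply Action.hom_ext; ext; rfl)
  functor_unitIso_comp := fun σ => by apply Action.hom_ext; rfl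

lemma twist_simple (σ : FDRep ℂ G) [Simple σ] (η : G →* ℂˣ) : Simple (σ.twist η) := by
  constructor
  intro Y f m
  let E := twistEquiv η
  let i : (σ.twist η).twist η⁻¹ ≅ σ := twistTwistIso σ η η⁻¹ (inv_mul_char η)
  let f' : E.inverse.obj Y ⟶ σ := E.inverse.map f ≫ i.hom
  haveI : Mono (E.inverse.map f) := inferInstance
  haveI : Mono f' := @mono_comp _ _ _ _ _ (E.inverse.map f) inferInstance _ (IsIso.mono_of_iso i.hom)
  have hhom : f'.hom = f.hom := by ext; rfl
  have hzero : f' = 0 ↔ f = 0 := by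
    constructor <;> intro hz
    · apply Action.hom_ext
      have := congrArg Action.Hom.hom hz
      rw [hhom] at this
      exact this.trans (Action.zero_hom ..).symm
    · apply Action.hom_ext
      rw [hhom]
      have := congrArg Action.Hom.hom hz
      exact this.trans (Action.zero_hom ..).symm
  constructor
  · intro hiso hf0
    haveI : IsIso (E.inverse.map f) := inferInstance
    haveI : IsIso f' := IsIso.comp_isIso' this i.isIso_hom
    exact (Simple.mono_isIso_iff_nonzero f').mp inferInstance (hzero.mpr hf0)
  · intro hf
    have hf' : f' ≠ 0 := fun h0 => hf (hzero.mp h0)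
    haveI : IsIso f' := (Simple.mono_isIso_iff_nonzero f').mpr hf'
    haveI : IsIso (E.inverse.map f) := @IsIso.of_isIso_comp_right _ _ _ _ _ _ i.hom i.isIso_hom this
    exact isIso_of_reflects_iso f E.inverse

open Representation Module in
lemma finrank_hom_eq_average [Fintype G] [Invertible (Fintype.card G : ℂ)]
    (V W : FDRep ℂ G) :
    (Module.finrank ℂ (W ⟶ V) : ℂ) =
      ⅟(Fintype.card G : ℂ) • ∑ g : G, V.character g * W.character g⁻¹ := by
  conv_rhs =>
    enter [2, 2, g]
    rw [mul_comm, ← char_dual, ← Pi.mul_apply, ← char_tensor]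
    rw [char_iso (FDRep.dualTensorIsoLinHom W.ρ V)]
  haveI : Invertible (Nat.card G : ℂ) := by rwa [Nat.card_eq_fintype_card]
  rw [invOf_eq_inv, smul_eq_mul, ← Nat.card_eq_fintype_card, average_char_eq_finrank_invariants]
  rw [of_ρ']
  exact congrArg Nat.cast (linHom.invariantsEquivFDRepHom W V).finrank_eq.symm

end FDRep

section Characters

variable (A : Type) [CommGroup A] [Finite A]

lemma finite_monoidHom_units : Finite (A →* ℂˣ) := by
  haveI : NeZero (Monoid.exponent A) := ⟨Monoid.exponent_ne_zero_of_finite⟩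
  obtain ⟨e⟩ := CommGroup.monoidHom_mulEquiv_of_hasEnoughRootsOfUnity A ℂ
  exact Finite.of_equiv A e.toEquiv.symm

lemma card_monoidHom_units : Nat.card (A →* ℂˣ) = Nat.card A := by
  haveI : NeZero (Monoid.exponent A) := ⟨Monoid.exponent_ne_zero_of_finite⟩
  obtain ⟨e⟩ := CommGroup.monoidHom_mulEquiv_of_hasEnoughRootsOfUnity A ℂ
  exact Nat.card_congr e.toEquiv

variable {A}

open Classical in
lemma sum_monoidHom_units_apply [Fintype (A →* ℂˣ)] (a : A) :
    ∑ η : A →* ℂˣ, (η a : ℂ) = if a = 1 then (Fintype.card (A →* ℂˣ) : ℂ) else 0 := by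
  haveI : NeZero (Monoid.exponent A) := ⟨Monoid.exponent_ne_zero_of_finite⟩
  split_ifs with h
  · subst h; simp
  · obtain ⟨ψ, hψ⟩ := CommGroup.exists_apply_ne_one_of_hasEnoughRootsOfUnity A ℂ h
    have h2 : (ψ a : ℂ) * ∑ η : A →* ℂˣ, (η a : ℂ) = ∑ η : A →* ℂˣ, (η a : ℂ) := by
      rw [Finset.mul_sum]
      exact Fintype.sum_bijective (fun η => ψ * η) (Group.mulLeft_bijective ψ) _ _
        (fun η => by simp)
    have hne : (ψ a : ℂ) ≠ 1 := fun hc => hψ (Units.ext hc)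
    have := sub_eq_zero.mpr h2
    rw [← sub_one_mul] at this
    rcases mul_eq_zero.mp this with h' | h'
    · exact absurd (by linear_combination h') hne
    · exact h'

end Characters

/-- **Clifford theory:** for `G` finite, `N ⊴ G` with abelian quotient and `σ` irreducible,
the number of characters `η` of `G/N` (viewed as characters of `G` trivial on `N`) with
`σ ⊗ η ≅ σ` equals `dim_ℂ End_N(Res^G_N σ)`. -/
theorem card_twist_stabilizer_eq_finrank_end {G : Type} [Group G] [Finite G]
    (N : Subgroup G) [N.Normal] (hab : ∀ x y : G ⧸ N, x * y = y * x)
    (σ : FDRep ℂ G) [Simple σ] :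
    Nat.card {η : G →* ℂˣ // (∀ n ∈ N, η n = 1) ∧ Nonempty (FDRep.twist σ η ≅ σ)} =
      Module.finrank ℂ (FDRep.resSubgroup N σ ⟶ FDRep.resSubgroup N σ) := by
  classical
  haveI : Fintype G := Fintype.ofFinite G
  letI : CommGroup (G ⧸ N) := { (inferInstance : Group (G ⧸ N)) with mul_comm := hab }
  haveI : Finite ((G ⧸ N) →* ℂˣ) := finite_monoidHom_units _
  haveI : Fintype ((G ⧸ N) →* ℂˣ) := Fintype.ofFinite _
  set T := {η : G →* ℂˣ // ∀ n ∈ N, η n = 1} with hT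
  let e : T ≃ ((G ⧸ N) →* ℂˣ) :=
  { toFun := fun p => QuotientGroup.lift N p.1 (fun n hn => by
      simpa [MonoidHom.mem_ker] using p.2 n hn)
    invFun := fun χ => ⟨χ.comp (QuotientGroup.mk' N), fun n hn => by
      simp [(QuotientGroup.eq_one_iff n).2 hn]⟩
    left_inv := fun p => Subtype.ext (MonoidHom.ext fun g => rfl)
    right_inv := fun χ => MonoidHom.ext fun q => QuotientGroup.induction_on q fun g => rfl }
  haveI : Fintype T := Fintype.ofEquiv _ e.symm
  haveI : Invertible (Fintype.card G : ℂ) :=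
    invertibleOfNonzero (by exact_mod_cast Fintype.card_ne_zero)
  haveI : Invertible (Fintype.card N : ℂ) :=
    invertibleOfNonzero (by exact_mod_cast Fintype.card_ne_zero)
  have hX : Nat.card {η : G →* ℂˣ // (∀ n ∈ N, η n = 1) ∧ Nonempty (FDRep.twist σ η ≅ σ)} =
      ∑ p : T, if Nonempty (FDRep.twist σ p.1 ≅ σ) then 1 else 0 := by
    rw [← Nat.card_congr (Equiv.subtypeSubtypeEquivSubtypeInter
      (fun η : G →* ℂˣ => ∀ n ∈ N, η n = 1) (fun η => Nonempty (FDRep.twist σ η ≅ σ)))]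
    rw [Nat.card_eq_fintype_card, Fintype.card_subtype, Finset.card_filter]
  -- three key per-term facts
  have key1 : ∀ p : T, ((if Nonempty (FDRep.twist σ p.1 ≅ σ) then 1 else 0 : ℕ) : ℂ) =
      (Module.finrank ℂ (FDRep.twist σ p.1 ⟶ σ) : ℂ) := by
    intro p
    haveI := FDRep.twist_simple σ p.1
    rw [finrank_hom_simple_simple ℂ (FDRep.twist σ p.1) σ]
  have key2 : ∀ g : G, ∑ p : T, ((p.1 g : ℂˣ) : ℂ) =
      if g ∈ N then (Fintype.card ((G ⧸ N) →* ℂˣ) : ℂ) else 0 := by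
    intro g
    rw [Fintype.sum_equiv e (fun p => ((p.1 g : ℂˣ) : ℂ))
      (fun χ => ((χ (QuotientGroup.mk g) : ℂˣ) : ℂ)) (fun p => rfl)]
    rw [sum_monoidHom_units_apply]
    congr 1
    rw [eq_iff_iff]
    exact (QuotientGroup.eq_one_iff g)
  -- main computation in ℂ
  have main : (Nat.card {η : G →* ℂˣ // (∀ n ∈ N, η n = 1) ∧
      Nonempty (FDRep.twist σ η ≅ σ)} : ℂ) =
      (Module.finrank ℂ (FDRep.resSubgroup N σ ⟶ FDRep.resSubgroup N σ) : ℂ) := by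
    set q : ℂ := (Fintype.card ((G ⧸ N) →* ℂˣ) : ℂ) with hqdef
    have hterm : ∀ g : G, ∑ p : T, σ.character g * (FDRep.twist σ p.1).character g⁻¹
        = if g ∈ N then q * (σ.character g * σ.character g⁻¹) else 0 := by
      intro g
      have h1 : ∀ p : T, σ.character g * (FDRep.twist σ p.1).character g⁻¹
          = (σ.character g * σ.character g⁻¹) * ((p.1 g⁻¹ : ℂˣ) : ℂ) := fun p => by
        rw [FDRep.twist_character]; ring
      rw [Finset.sum_congr rfl (fun p _ => h1 p), ← Finset.mul_sum, key2 g⁻¹, inv_mem_iff]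
      split_ifs with h
      · ring
      · ring
    have hsub : ∑ g : G, (if g ∈ N then q * (σ.character g * σ.character g⁻¹) else 0)
        = ∑ n : N, q * (σ.character ↑n * σ.character (↑n)⁻¹) := by
      rw [← Finset.sum_filter]
      exact Finset.sum_subtype _ (by simp) _
    have hq : q * (Fintype.card N : ℂ) = (Fintype.card G : ℂ) := by
      have h1 : Nat.card ((G ⧸ N) →* ℂˣ) = Nat.card (G ⧸ N) := card_monoidHom_units _
      have h2 : Nat.card G = Nat.card (G ⧸ N) * Nat.card N :=
        Subgroup.card_eq_card_quotient_mul_card_subgroup N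
      rw [hqdef]
      rw [← Nat.cast_mul]
      rw [← Nat.card_eq_fintype_card, ← Nat.card_eq_fintype_card, h1, ← h2,
        Nat.card_eq_fintype_card]
    rw [hX, Nat.cast_sum]
    rw [Finset.sum_congr rfl (fun p _ => ((key1 p).trans
      (FDRep.finrank_hom_eq_average σ (FDRep.twist σ p.1))))]
    rw [← Finset.smul_sum, Finset.sum_comm]
    rw [Finset.sum_congr rfl (fun g _ => hterm g), hsub]
    rw [FDRep.finrank_hom_eq_average (FDRep.resSubgroup N σ) (FDRep.resSubgroup N σ)]
    have hres : ∀ n : N, (FDRep.resSubgroup N σ).character n *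
        (FDRep.resSubgroup N σ).character n⁻¹ = σ.character ↑n * σ.character (↑n)⁻¹ :=
      fun n => rfl
    rw [Finset.sum_congr rfl (fun n _ => hres n)]
    rw [← Finset.mul_sum, smul_eq_mul, smul_eq_mul, invOf_eq_inv, invOf_eq_inv]
    have hc0 : (Fintype.card G : ℂ) ≠ 0 := by exact_mod_cast Fintype.card_ne_zero
    have hn0 : (Fintype.card N : ℂ) ≠ 0 := by exact_mod_cast Fintype.card_ne_zero
    have hkey : (Fintype.card G : ℂ)⁻¹ * q = (Fintype.card N : ℂ)⁻¹ := by
      field_simp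
      linear_combination hq
    rw [← mul_assoc, hkey]
  exact_mod_cast main
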